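/- arXiv:1204.4710 — 6 statements merged into one kernel-verified Lean document; each statement's English description precedes it below -/
import Mathlib

section
/- For every positive integer k and every real number c with 1 ≤ c ≤ 2, the inequality (∑_{i=0}^{k} (1 - i/k) · C(k,i)² · cⁱ) / (∑_{i=0}^{k} C(k,i)² · cⁱ) ≥ 1/3 holds, where C(k,i) denotes the binomial coefficient. -/
/-!
Write `A`, `B` for the zeroth and first moments of the weights `C(k,i)² cⁱ`, and `Q`, `R` for
those of the binomial weights `C(k,i) cⁱ`. The claim is `B/A ≤ 2k/3`. For the binomial weights
the mean is explicit, `R/Q = kc/(1+c) ≤ 2k/3` since `c ≤ 2`. Multiplying the binomial weights by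
the extra factor `C(k,i)`, which is symmetric and unimodal about `k/2`, can only pull the mean
back towards `k/2`, while `c ≥ 1` puts it above `k/2`; hence `B/A ≤ R/Q`. This Chebyshev-type
inequality is proved by symmetrising the double sum `AR - BQ` under `i ↔ j` and
`(i, j) ↦ (k - i, k - j)`.
-/

open Finset

theorem Nat.choose_le_choose_of_le_half {n i j : ℕ} (hij : i ≤ j) (hj : j ≤ n / 2) :
    n.choose i ≤ n.choose j := by
  induction j, hij using Nat.le_induction with
  | base => rfl
  | succ m _ ih => exact (ih (by omega)).trans (Nat.choose_le_succ_of_lt_half_left (by omega))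

theorem Nat.choose_le_choose_of_le_of_add_le {n i j : ℕ} (hij : i ≤ j) (h : i + j ≤ n) :
    n.choose i ≤ n.choose j := by
  rcases le_or_gt j (n / 2) with hj | hj
  · exact choose_le_choose_of_le_half hij hj
  · rw [← Nat.choose_symm (by omega : j ≤ n)]
    exact choose_le_choose_of_le_half (by omega) (by omega)

theorem sum_range_succ_natCast_mul_choose_mul_pow {R : Type*} [CommSemiring R] (n : ℕ) (x : R) :
    ∑ i ∈ range (n + 2), (i : R) * (n + 1).choose i * x ^ i = (n + 1) * x * (x + 1) ^ n := by
  have hterm (i : ℕ) : ((i + 1 : ℕ) : R) * (n + 1).choose (i + 1) * x ^ (i + 1) =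
      (n + 1) * x * (n.choose i * x ^ i) := by
    have := congrArg (Nat.cast : ℕ → R) (Nat.add_one_mul_choose_eq n i)
    push_cast at this ⊢
    calc ((i : R) + 1) * (n + 1).choose (i + 1) * x ^ (i + 1)
        = (n + 1).choose (i + 1) * ((i : R) + 1) * (x ^ i * x) := by ring
      _ = (n + 1) * x * (n.choose i * x ^ i) := by rw [← this]; ring
  rw [sum_range_succ', sum_congr rfl fun i _ => hterm i, ← mul_sum, add_pow]
  simp [mul_comm]

theorem three_mul_sum_natCast_mul_choose_mul_pow_le (k : ℕ) {c : ℝ} (hc0 : 0 ≤ c) (hc2 : c ≤ 2) :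
    3 * ∑ i ∈ range (k + 1), (i : ℝ) * k.choose i * c ^ i ≤
      2 * k * ∑ i ∈ range (k + 1), (k.choose i : ℝ) * c ^ i := by
  rcases k with _ | n
  · simp
  · rw [sum_range_succ_natCast_mul_choose_mul_pow]
    have hbinom :
        ∑ i ∈ range (n + 1 + 1), ((n + 1).choose i : ℝ) * c ^ i = (c + 1) ^ (n + 1) := by
      simp [add_pow, mul_comm]
    rw [hbinom, pow_succ]
    push_cast
    have : 0 ≤ (n + 1 : ℝ) * (c + 1) ^ n := by positivity
    nlinarith

theorem sum_range_sum_range_reflect {M : Type*} [AddCommMonoid M] (f : ℕ → ℕ → M) (k : ℕ) :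
    ∑ i ∈ range (k + 1), ∑ j ∈ range (k + 1), f (k - i) (k - j) =
      ∑ i ∈ range (k + 1), ∑ j ∈ range (k + 1), f i j := by
  have h (g : ℕ → M) : ∑ i ∈ range (k + 1), g (k - i) = ∑ i ∈ range (k + 1), g i := by
    simpa using sum_range_reflect g (k + 1)
  rw [h fun i => ∑ j ∈ range (k + 1), f i (k - j)]
  exact sum_congr rfl fun i _ => h (f i)

theorem sum_range_sum_range_nonneg_of_symmetrize {k : ℕ} {f : ℕ → ℕ → ℝ}
    (h : ∀ i ≤ k, ∀ j ≤ k, 0 ≤ f i j + f j i + f (k - i) (k - j) + f (k - j) (k - i)) :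
    0 ≤ ∑ i ∈ range (k + 1), ∑ j ∈ range (k + 1), f i j := by
  have h4 : 4 * ∑ i ∈ range (k + 1), ∑ j ∈ range (k + 1), f i j =
      ∑ i ∈ range (k + 1), ∑ j ∈ range (k + 1),
        (f i j + f j i + f (k - i) (k - j) + f (k - j) (k - i)) := by
    simp only [sum_add_distrib]
    rw [sum_comm (f := fun i j => f j i), sum_range_sum_range_reflect,
      sum_comm (f := fun i j => f (k - j) (k - i)), sum_range_sum_range_reflect]
    ring
  have : 0 ≤ 4 * ∑ i ∈ range (k + 1), ∑ j ∈ range (k + 1), f i j := by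
    rw [h4]
    exact sum_nonneg fun i hi => sum_nonneg fun j hj =>
      h i (Nat.lt_succ_iff.mp (mem_range.mp hi)) j (Nat.lt_succ_iff.mp (mem_range.mp hj))
  linarith

section Unimodal

variable {k i j : ℕ} {a : ℕ → ℝ}

theorem sub_mul_sub_nonneg_of_add_le (hmono : ∀ i j, i ≤ j → i + j ≤ k → a i ≤ a j)
    (h : i + j ≤ k) : 0 ≤ ((j : ℝ) - i) * (a j - a i) := by
  rcases le_total i j with hij | hji
  · exact mul_nonneg (sub_nonneg.2 (by exact_mod_cast hij)) (sub_nonneg.2 (hmono i j hij h))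
  · exact mul_nonneg_of_nonpos_of_nonpos (sub_nonpos.2 (by exact_mod_cast hji))
      (sub_nonpos.2 (hmono j i hji (by omega)))

theorem sub_mul_sub_nonpos_of_le_add (hsymm : ∀ i ≤ k, a (k - i) = a i)
    (hmono : ∀ i j, i ≤ j → i + j ≤ k → a i ≤ a j) (hi : i ≤ k) (hj : j ≤ k) (h : k ≤ i + j) :
    ((j : ℝ) - i) * (a j - a i) ≤ 0 := by
  have hrefl := sub_mul_sub_nonneg_of_add_le (i := k - i) (j := k - j) hmono (by omega)
  rw [hsymm i hi, hsymm j hj, Nat.cast_sub hi, Nat.cast_sub hj] at hrefl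
  linarith

theorem sub_mul_sub_mul_pow_sub_pow_nonneg {c : ℝ} (hc : 1 ≤ c)
    (hsymm : ∀ i ≤ k, a (k - i) = a i)
    (hmono : ∀ i j, i ≤ j → i + j ≤ k → a i ≤ a j) (hi : i ≤ k) (hj : j ≤ k) :
    0 ≤ ((j : ℝ) - i) * (a j - a i) * (c ^ ((k - i) + (k - j)) - c ^ (i + j)) := by
  rcases le_total (i + j) k with h | h
  · exact mul_nonneg (sub_mul_sub_nonneg_of_add_le hmono h)
      (sub_nonneg.2 (pow_le_pow_right₀ hc (by omega)))
  · exact mul_nonneg_of_nonpos_of_nonpos (sub_mul_sub_nonpos_of_le_add hsymm hmono hi hj h)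
      (sub_nonpos.2 (pow_le_pow_right₀ hc (by omega)))

theorem sum_natCast_mul_sq_mul_pow_mul_sum_le {c : ℝ} (hc : 1 ≤ c) (ha : ∀ i, 0 ≤ a i)
    (hsymm : ∀ i ≤ k, a (k - i) = a i) (hmono : ∀ i j, i ≤ j → i + j ≤ k → a i ≤ a j) :
    (∑ i ∈ range (k + 1), (i : ℝ) * a i ^ 2 * c ^ i) * ∑ i ∈ range (k + 1), a i * c ^ i ≤
      (∑ i ∈ range (k + 1), a i ^ 2 * c ^ i) * ∑ i ∈ range (k + 1), (i : ℝ) * a i * c ^ i := by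
  rw [← sub_nonneg, sum_mul_sum, sum_mul_sum, ← sum_sub_distrib]
  simp_rw [← sum_sub_distrib]
  -- the four symmetrised terms combine to `a i * a j * (j - i) (a j - a i) (c^(2k-i-j) - c^(i+j))`
  refine sum_range_sum_range_nonneg_of_symmetrize fun i hi j hj => ?_
  have hterm := mul_nonneg (mul_nonneg (ha i) (ha j))
    (sub_mul_sub_mul_pow_sub_pow_nonneg hc hsymm hmono hi hj)
  rw [hsymm i hi, hsymm j hj, Nat.cast_sub hi, Nat.cast_sub hj]
  rw [pow_add, pow_add] at hterm
  refine hterm.trans_eq ?_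
  ring

end Unimodal

theorem stmt_0 (k : ℕ) (hk : 0 < k) (c : ℝ) (hc1 : 1 ≤ c) (hc2 : c ≤ 2) :
    (∑ i ∈ range (k + 1), (1 - (i : ℝ) / k) * (k.choose i : ℝ) ^ 2 * c ^ i) /
      (∑ i ∈ range (k + 1), (k.choose i : ℝ) ^ 2 * c ^ i) ≥ 1 / 3 := by
  set A := ∑ i ∈ range (k + 1), (k.choose i : ℝ) ^ 2 * c ^ i
  set B := ∑ i ∈ range (k + 1), (i : ℝ) * (k.choose i : ℝ) ^ 2 * c ^ i
  set Q := ∑ i ∈ range (k + 1), (k.choose i : ℝ) * c ^ i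
  set R := ∑ i ∈ range (k + 1), (i : ℝ) * k.choose i * c ^ i
  have hchoose_pos : ∀ i ∈ range (k + 1), (0 : ℝ) < k.choose i := fun i hi =>
    Nat.cast_pos.2 (Nat.choose_pos (Nat.lt_succ_iff.1 (mem_range.1 hi)))
  have hA : 0 < A :=
    sum_pos (fun i hi => by have := hchoose_pos i hi; positivity) nonempty_range_add_one
  have hQ : 0 < Q :=
    sum_pos (fun i hi => by have := hchoose_pos i hi; positivity) nonempty_range_add_one
  have hBQ : B * Q ≤ A * R :=
    sum_natCast_mul_sq_mul_pow_mul_sum_le hc1 (fun _ => Nat.cast_nonneg _)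
      (fun i hi => by rw [Nat.choose_symm hi])
      (fun i j hij h => by exact_mod_cast Nat.choose_le_choose_of_le_of_add_le hij h)
  have hR : 3 * R ≤ 2 * k * Q := three_mul_sum_natCast_mul_choose_mul_pow_le k (by linarith) hc2
  have hB : 3 * B ≤ 2 * k * A := by
    refine le_of_mul_le_mul_right ?_ hQ
    calc 3 * B * Q ≤ A * (3 * R) := by linarith
      _ ≤ A * (2 * k * Q) := mul_le_mul_of_nonneg_left hR hA.le
      _ = 2 * k * A * Q := by ring
  have hnum :
      ∑ i ∈ range (k + 1), (1 - (i : ℝ) / k) * (k.choose i : ℝ) ^ 2 * c ^ i = A - B / k := by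
    rw [sum_div, ← sum_sub_distrib]
    exact sum_congr rfl fun i _ => by ring
  have hBk : B / k ≤ 2 / 3 * A := by
    rw [div_le_iff₀ (Nat.cast_pos.2 hk)]
    linarith
  rw [hnum, ge_iff_le, le_div_iff₀ hA]
  linarith
end

section
/- Fix a positive integer k and define f(c) = (∑_{i=0}^{k} (1 - i/k) · C(k,i)² · cⁱ) / (∑_{i=0}^{k} C(k,i)² · cⁱ) for c > 0. Then f is nonincreasing on (0, ∞): for all real numbers 0 < c₁ ≤ c₂ one has f(c₂) ≤ f(c₁). -/
/-!
`f c` is the mean of the decreasing sequence `wᵢ = 1 - i/k` under the weights `C(k,i)² cⁱ`.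
Passing from `c₁` to `c₂` multiplies the weights by the increasing factor `(c₂/c₁)ⁱ`, and the
weighted Chebyshev sum inequality for the oppositely ordered `wᵢ` and `(c₂/c₁)ⁱ` says exactly that
this can only lower the mean.
-/

open Finset

theorem AntivaryOn.sum_mul_sum_mul_le_sum_mul_mul_sum {ι R : Type*} [CommRing R] [LinearOrder R]
    [IsStrictOrderedRing R] {s : Finset ι} {p f g : ι → R} (hp : ∀ i ∈ s, 0 ≤ p i)
    (hfg : AntivaryOn f g s) :
    (∑ i ∈ s, p i) * ∑ i ∈ s, p i * f i * g i ≤ (∑ i ∈ s, p i * f i) * ∑ i ∈ s, p i * g i := by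
  set P := ∑ i ∈ s, p i
  set PF := ∑ i ∈ s, p i * f i
  set PG := ∑ i ∈ s, p i * g i
  set PFG := ∑ i ∈ s, p i * f i * g i
  have hsymm : 2 * (PF * PG - P * PFG)
      = -∑ i ∈ s, ∑ j ∈ s, p i * p j * ((f j - f i) * (g j - g i)) := by
    calc 2 * (PF * PG - P * PFG) = PF * PG + PG * PF - P * PFG - PFG * P := by ring
      _ = _ := by
        simp only [P, PF, PG, PFG, sum_mul_sum, ← sum_add_distrib, ← sum_sub_distrib,
          ← sum_neg_distrib]
        exact sum_congr rfl fun i _ => sum_congr rfl fun j _ => by ring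
  have hnonpos : ∑ i ∈ s, ∑ j ∈ s, p i * p j * ((f j - f i) * (g j - g i)) ≤ 0 :=
    sum_nonpos fun i hi => sum_nonpos fun j hj =>
      mul_nonpos_of_nonneg_of_nonpos (mul_nonneg (hp i hi) (hp j hj))
        (hfg.sub_mul_sub_nonpos hi hj)
  linarith

theorem Antitone.sum_mul_mul_pow_mul_sum_mul_pow_le {R : Type*} [Field R] [LinearOrder R]
    [IsStrictOrderedRing R] {s : Finset ℕ} {w b : ℕ → R} (hw : Antitone w)
    (hb : ∀ i ∈ s, 0 ≤ b i) {c₁ c₂ : R} (hc₁ : 0 < c₁) (h : c₁ ≤ c₂) :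
    (∑ i ∈ s, w i * b i * c₂ ^ i) * ∑ i ∈ s, b i * c₁ ^ i
      ≤ (∑ i ∈ s, w i * b i * c₁ ^ i) * ∑ i ∈ s, b i * c₂ ^ i := by
  have hratio : Monotone fun i : ℕ => (c₂ / c₁) ^ i :=
    pow_right_mono₀ ((one_le_div hc₁).2 h)
  have hpow : ∀ i : ℕ, c₁ ^ i * (c₂ / c₁) ^ i = c₂ ^ i := fun i => by
    rw [← mul_pow, mul_div_cancel₀ _ hc₁.ne']
  have key := ((hw.antivary hratio).antivaryOn (s : Set ℕ)).sum_mul_sum_mul_le_sum_mul_mul_sum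
    (p := fun i => b i * c₁ ^ i) fun i hi => mul_nonneg (hb i hi) (pow_nonneg hc₁.le i)
  have hnum₂ : ∑ i ∈ s, b i * c₁ ^ i * w i * (c₂ / c₁) ^ i = ∑ i ∈ s, w i * b i * c₂ ^ i :=
    sum_congr rfl fun i _ => by rw [← hpow]; ring
  have hden₂ : ∑ i ∈ s, b i * c₁ ^ i * (c₂ / c₁) ^ i = ∑ i ∈ s, b i * c₂ ^ i :=
    sum_congr rfl fun i _ => by rw [mul_assoc, hpow]
  have hnum₁ : ∑ i ∈ s, b i * c₁ ^ i * w i = ∑ i ∈ s, w i * b i * c₁ ^ i :=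
    sum_congr rfl fun i _ => by ring
  rw [mul_comm]
  rwa [hnum₂, hden₂, hnum₁] at key

theorem stmt_1_general (k : ℕ)
    (f : ℝ → ℝ)
    (hf : ∀ c : ℝ, 0 < c →
      f c = (∑ i ∈ range (k + 1), (1 - (i : ℝ) / k) * (k.choose i : ℝ) ^ 2 * c ^ i) /
        (∑ i ∈ range (k + 1), (k.choose i : ℝ) ^ 2 * c ^ i))
    (c₁ c₂ : ℝ) (hc₁ : 0 < c₁) (h : c₁ ≤ c₂) :
    f c₂ ≤ f c₁ := by
  have hc₂ : 0 < c₂ := hc₁.trans_le h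
  have hden : ∀ c : ℝ, 0 < c → 0 < ∑ i ∈ range (k + 1), (k.choose i : ℝ) ^ 2 * c ^ i :=
    fun c hc => sum_pos' (fun i _ => by positivity) ⟨0, by simp⟩
  have hw : Antitone fun i : ℕ => 1 - (i : ℝ) / k := fun i j hij =>
    sub_le_sub_left (div_le_div_of_nonneg_right (Nat.cast_le.2 hij) k.cast_nonneg) 1
  rw [hf c₁ hc₁, hf c₂ hc₂, div_le_div_iff₀ (hden c₂ hc₂) (hden c₁ hc₁)]
  exact hw.sum_mul_mul_pow_mul_sum_mul_pow_le (fun i _ => by positivity) hc₁ h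

theorem stmt_1 (k : ℕ) (hk : 0 < k)
    (f : ℝ → ℝ)
    (hf : ∀ c : ℝ, 0 < c →
      f c = (∑ i ∈ range (k + 1), (1 - (i : ℝ) / k) * (k.choose i : ℝ) ^ 2 * c ^ i) /
        (∑ i ∈ range (k + 1), (k.choose i : ℝ) ^ 2 * c ^ i))
    (c₁ c₂ : ℝ) (hc₁ : 0 < c₁) (h : c₁ ≤ c₂) :
    f c₂ ≤ f c₁ :=
  stmt_1_general k f hf c₁ c₂ hc₁ h
end

section
/- For every integer k > 10⁶, the inequality ∑_{i : 0.666·k ≤ i ≤ k} C(k,i)² · 2ⁱ < (1/1000) · ∑_{i : 0 ≤ i < 0.666·k} C(k,i)² · 2ⁱ holds, where both sums range over integers i in the indicated ranges. -/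
open Finset

set_option maxHeartbeats 2000000

theorem stmt_3 (k : ℕ) (hk : 10 ^ 6 < k) :
    ∑ i ∈ (range (k + 1)).filter (fun i : ℕ => 0.666 * (k : ℝ) ≤ (i : ℝ)),
        (k.choose i : ℝ) ^ 2 * 2 ^ i <
      (1 / 1000) * ∑ i ∈ (range (k + 1)).filter (fun i : ℕ => (i : ℝ) < 0.666 * (k : ℝ)),
        (k.choose i : ℝ) ^ 2 * 2 ^ i := by
  set t : ℕ → ℝ := fun i => (k.choose i : ℝ) ^ 2 * 2 ^ i with ht
  have htnn : ∀ i, 0 ≤ t i := by intro i; simp only [ht]; positivity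
  have hkr : (10:ℝ) ^ 6 < k := by exact_mod_cast hk
  set i0 := ⌈(0.666 : ℝ) * k⌉₊ with hi0
  have h1 : (0.666 : ℝ) * k ≤ i0 := Nat.le_ceil _
  have hi0k : i0 ≤ k := Nat.ceil_le.mpr (by nlinarith)
  have hi0big : 666000 ≤ i0 := by
    have : (666000 : ℝ) ≤ (i0 : ℝ) := by nlinarith
    exact_mod_cast this
  have hceil_lt : (i0 : ℝ) < 0.666 * k + 1 := Nat.ceil_lt_add_one (by nlinarith)
  -- rewrite the filters
  have hfilter1 : (range (k + 1)).filter (fun i : ℕ => 0.666 * (k : ℝ) ≤ (i : ℝ))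
      = Ico i0 (k + 1) := by
    ext i
    simp only [mem_filter, mem_range, mem_Ico]
    constructor
    · rintro ⟨h, h2⟩; exact ⟨Nat.ceil_le.mpr h2, h⟩
    · rintro ⟨h, h2⟩; exact ⟨h2, Nat.ceil_le.mp h⟩
  have hfilter2 : (range (k + 1)).filter (fun i : ℕ => (i : ℝ) < 0.666 * (k : ℝ))
      = range i0 := by
    ext i
    simp only [mem_filter, mem_range]
    constructor
    · rintro ⟨h, h2⟩; exact Nat.lt_ceil.mpr h2
    · intro h; exact ⟨lt_of_lt_of_le h (by omega), Nat.lt_ceil.mp h⟩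
  rw [hfilter1, hfilter2]
  -- step lemma A : geometric decay of the tail
  have hstepA : ∀ i, i0 ≤ i → t (i + 1) ≤ 0.51 * t i := by
    intro i hi
    have hir : (0.666 : ℝ) * k ≤ i := le_trans h1 (by exact_mod_cast hi)
    rcases le_or_gt (i + 1) k with hik | hik
    · have hik' : i ≤ k := by omega
      have hb : (k.choose (i+1) : ℝ) * ((i:ℝ) + 1) = (k.choose i : ℝ) * ((k:ℝ) - i) := by
        have hrec := Nat.choose_succ_right_eq k i
        calc (k.choose (i+1) : ℝ) * ((i:ℝ) + 1) = ((k.choose (i+1) * (i+1) : ℕ) : ℝ) := by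
              push_cast; ring
          _ = ((k.choose i * (k - i) : ℕ) : ℝ) := by rw [hrec]
          _ = (k.choose i : ℝ) * ((k:ℝ) - i) := by push_cast [Nat.cast_sub hik']; ring
      set a : ℝ := (k.choose i : ℝ) with ha
      set b : ℝ := (k.choose (i+1) : ℝ) with hbdef
      have hkir : ((i:ℝ)) ≤ k := by exact_mod_cast hik'
      have hnn : (0:ℝ) ≤ (k:ℝ) - i := by linarith
      have hlinA : (k:ℝ) - i ≤ 0.5049 * ((i:ℝ) + 1) := by linarith
      have h2 : 2 * ((k:ℝ) - i)^2 ≤ 0.51 * ((i:ℝ) + 1)^2 := by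
        nlinarith [mul_self_le_mul_self hnn hlinA]
      have hb2 : b^2 * ((i:ℝ)+1)^2 = a^2 * ((k:ℝ)-i)^2 := by
        rw [← mul_pow, ← mul_pow, hb]
      have hi1 : (0:ℝ) < (i:ℝ) + 1 := by positivity
      have hkey : 2 * b^2 ≤ 0.51 * a^2 := by
        nlinarith [mul_le_mul_of_nonneg_left h2 (sq_nonneg a), pow_pos hi1 2, sq_nonneg b]
      have hp : (0:ℝ) < 2^i := by positivity
      have e1 : t (i+1) = 2 * b^2 * 2^i := by
        simp only [ht]; rw [pow_succ (2:ℝ) i]; ring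
      have e2 : (0.51:ℝ) * t i = 0.51 * a^2 * 2^i := by
        simp only [ht]; ring
      rw [e1, e2]
      exact mul_le_mul_of_nonneg_right hkey (le_of_lt hp)
    · have hch0 : k.choose (i+1) = 0 := Nat.choose_eq_zero_of_lt (by omega)
      have ht0 : t (i+1) = 0 := by simp only [ht, hch0]; norm_num
      rw [ht0]
      have := htnn i
      linarith
  -- step lemma B : growth just below the cutoff
  have hstepB : ∀ j, i0 - 12 ≤ j → j < i0 → 1.97 * t (j + 1) ≤ t j := by
    intro j hjl hjh
    have hjk : j + 1 ≤ k := by omega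
    have hjr : (j : ℝ) < 0.666 * k := Nat.lt_ceil.mp hjh
    have hjlr : (i0 : ℝ) - 12 ≤ (j : ℝ) := by
      have h' : ((i0 - 12 : ℕ) : ℝ) ≤ (j : ℝ) := by exact_mod_cast hjl
      rw [Nat.cast_sub (by omega)] at h'
      exact h'
    have hjlow : (0.666 : ℝ) * k - 12 ≤ j := by linarith
    have hb : (k.choose (j+1) : ℝ) * ((j:ℝ) + 1) = (k.choose j : ℝ) * ((k:ℝ) - j) := by
      have hrec := Nat.choose_succ_right_eq k j
      calc (k.choose (j+1) : ℝ) * ((j:ℝ) + 1) = ((k.choose (j+1) * (j+1) : ℕ) : ℝ) := by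
            push_cast; ring
        _ = ((k.choose j * (k - j) : ℕ) : ℝ) := by rw [hrec]
        _ = (k.choose j : ℝ) * ((k:ℝ) - j) := by push_cast [Nat.cast_sub (by omega : j ≤ k)]; ring
    set a : ℝ := (k.choose j : ℝ) with ha
    set b : ℝ := (k.choose (j+1) : ℝ) with hbdef
    have hbnn : (0:ℝ) ≤ b := by positivity
    have hkj0 : (0:ℝ) < (k:ℝ) - j := by
      have h' : (j:ℝ) + 1 ≤ k := by exact_mod_cast hjk
      linarith
    have hlin : 1.985 * ((k:ℝ) - j) ≤ (j:ℝ) + 1 := by nlinarith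
    have hq : 3.94 * ((k:ℝ) - j)^2 ≤ ((j:ℝ) + 1)^2 := by
      nlinarith [mul_self_le_mul_self (by linarith : (0:ℝ) ≤ 1.985 * ((k:ℝ) - j)) hlin]
    have hb2 : b^2 * ((j:ℝ)+1)^2 = a^2 * ((k:ℝ)-j)^2 := by
      rw [← mul_pow, ← mul_pow, hb]
    have hkey : 1.97 * (2 * b^2) ≤ a^2 := by
      nlinarith [mul_le_mul_of_nonneg_left hq (sq_nonneg b), pow_pos hkj0 2]
    have hp : (0:ℝ) < 2^j := by positivity
    have e1 : (1.97:ℝ) * t (j+1) = 1.97 * (2 * b^2) * 2^j := by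
      simp only [ht]; rw [pow_succ (2:ℝ) j]; ring
    have e2 : t j = a^2 * 2^j := by simp only [ht]; rfl
    rw [e1, e2]
    exact mul_le_mul_of_nonneg_right hkey (le_of_lt hp)
  -- chain: t (i0 - 12) ≥ 3000 * t i0
  have hchain : ∀ m, m ≤ 12 → 1.97 ^ m * t i0 ≤ t (i0 - m) := by
    intro m
    induction m with
    | zero => intro _; simp
    | succ n ih =>
      intro hn
      have h1' := ih (by omega)
      have hstep := hstepB (i0 - (n+1)) (by omega) (by omega)
      have heq : i0 - (n+1) + 1 = i0 - n := by omega
      rw [heq] at hstep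
      have h197 : (0:ℝ) ≤ (1.97:ℝ) ^ n := by positivity
      calc (1.97:ℝ) ^ (n+1) * t i0 = 1.97 * (1.97 ^ n * t i0) := by ring
        _ ≤ 1.97 * t (i0 - n) := by linarith [mul_le_mul_of_nonneg_left h1' (by norm_num : (0:ℝ) ≤ 1.97)]
        _ ≤ t (i0 - (n+1)) := hstep
  have hchain12 : 3000 * t i0 ≤ t (i0 - 12) := by
    have hc := hchain 12 le_rfl
    have hpow : (3000:ℝ) ≤ 1.97 ^ 12 := by norm_num
    nlinarith [htnn i0]
  -- geometric decay bound
  have hgeo : ∀ j, t (i0 + j) ≤ 0.51 ^ j * t i0 := by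
    intro j
    induction j with
    | zero => simp
    | succ n ih =>
      have hA := hstepA (i0 + n) (by omega)
      have heq : i0 + (n + 1) = (i0 + n) + 1 := by omega
      rw [heq]
      calc t ((i0 + n) + 1) ≤ 0.51 * t (i0 + n) := hA
        _ ≤ 0.51 * (0.51 ^ n * t i0) := by linarith [mul_le_mul_of_nonneg_left ih (by norm_num : (0:ℝ) ≤ 0.51)]
        _ = 0.51 ^ (n+1) * t i0 := by ring
  -- tail bound
  have hgeosum : ∀ n : ℕ, ∑ j ∈ range n, (0.51:ℝ) ^ j ≤ 1 / 0.49 := by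
    intro n
    rw [geom_sum_eq (by norm_num : (0.51:ℝ) ≠ 1) n]
    have h051 : (0:ℝ) ≤ (0.51:ℝ) ^ n := by positivity
    have heq : ((0.51:ℝ) ^ n - 1) / (0.51 - 1) = (1 - 0.51 ^ n) / 0.49 := by ring
    rw [heq, div_le_div_iff₀ (by norm_num) (by norm_num)]
    nlinarith
  have htail : ∑ i ∈ Ico i0 (k+1), t i ≤ 2.1 * t i0 := by
    rw [Finset.sum_Ico_eq_sum_range]
    calc ∑ j ∈ range (k + 1 - i0), t (i0 + j)
        ≤ ∑ j ∈ range (k + 1 - i0), (0.51:ℝ) ^ j * t i0 := by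
          apply Finset.sum_le_sum; intro j _; exact hgeo j
      _ = (∑ j ∈ range (k + 1 - i0), (0.51:ℝ) ^ j) * t i0 := by rw [Finset.sum_mul]
      _ ≤ (1 / 0.49) * t i0 := mul_le_mul_of_nonneg_right (hgeosum _) (htnn i0)
      _ ≤ 2.1 * t i0 := by
          have := htnn i0
          nlinarith
  -- head bound
  have hhead : t (i0 - 12) ≤ ∑ i ∈ range i0, t i := by
    apply Finset.single_le_sum (fun i _ => htnn i)
    simp only [mem_range]
    omega
  -- t i0 > 0
  have hti0pos : 0 < t i0 := by
    simp only [ht]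
    have := Nat.choose_pos hi0k
    positivity
  calc ∑ i ∈ Ico i0 (k+1), t i ≤ 2.1 * t i0 := htail
    _ < 3 * t i0 := by nlinarith
    _ = (1/1000) * (3000 * t i0) := by ring
    _ ≤ (1/1000) * t (i0 - 12) := by linarith
    _ ≤ (1/1000) * ∑ i ∈ range i0, t i := by linarith
end

section
/- Let ℓ ≥ 1 be an integer and let p, p' ∈ (0,1). Let Z, Z', S be independent random variables where Z is Bernoulli with parameter p, Z' is Bernoulli with parameter p', and S is binomial with parameters ℓ and p'. Then the Kullback-Leibler divergence between the law of Z + S and the law of Z' + S satisfies KL(Z+S, Z'+S) ≤ (p − p')² / ((1 − p')·p'·(ℓ + 1)). -/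
/-!
Write `b` for the law of `S` and `b⁺` for that of `S + 1`. Conditioning on the Bernoulli variable,
the two laws are `P = (1 - p) b + p b⁺` and `Q = (1 - p') b + p' b⁺`, and `Q` is binomial with
parameters `ℓ + 1` and `p'`. Bound the divergence by the `χ²`-divergence,
`KL(P, Q) ≤ ∑ (P - Q)² / Q = (p - p')² ∑ (b⁺ - b)² / Q`. The likelihood ratios `b / Q` and `b⁺ / Q`
are affine in `k`, so `(b⁺ - b) / Q = (k - c) / ((ℓ + 1) p' (1 - p'))` with `c = (ℓ + 1) p'`, and
`∑ (b⁺ - b) (k - c) = 1` because shifting a law by one raises its mean by one.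
-/

/-- Probability mass function on ℕ of a Bernoulli distribution with parameter `p`. -/
noncomputable def bernoulliPMF (p : ℝ) : ℕ → ℝ :=
  fun k => if k = 0 then 1 - p else if k = 1 then p else 0

/-- Probability mass function on ℕ of a binomial distribution with parameters `m` and `q`. -/
noncomputable def binomialPMF (m : ℕ) (q : ℝ) : ℕ → ℝ :=
  fun k => (m.choose k : ℝ) * q ^ k * (1 - q) ^ (m - k)

/-- Convolution of two mass functions on ℕ: the law of an independent sum. -/
noncomputable def convPMF (P Q : ℕ → ℝ) : ℕ → ℝ :=
  fun k => ∑ j ∈ Finset.range (k + 1), P j * Q (k - j)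

/-- Kullback-Leibler divergence between two mass functions on ℕ
(with the convention `0 * log 0 = 0`, which holds automatically here). -/
noncomputable def klDivN (P Q : ℕ → ℝ) : ℝ :=
  ∑' k, P k * Real.log (P k / Q k)

open Finset

noncomputable def shiftPMF (f : ℕ → ℝ) : ℕ → ℝ
  | 0 => 0
  | k + 1 => f k

@[simp] lemma shiftPMF_zero (f : ℕ → ℝ) : shiftPMF f 0 = 0 := rfl

@[simp] lemma shiftPMF_succ (f : ℕ → ℝ) (k : ℕ) : shiftPMF f (k + 1) = f k := rfl

lemma convPMF_bernoulliPMF_apply (p : ℝ) (f : ℕ → ℝ) (k : ℕ) :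
    convPMF (bernoulliPMF p) f k = (1 - p) * f k + p * shiftPMF f k := by
  cases k with
  | zero => simp [convPMF, bernoulliPMF]
  | succ k =>
    rw [convPMF, sum_range_succ', sum_range_succ']
    simp [bernoulliPMF, add_comm]

lemma sum_range_succ_shiftPMF (f : ℕ → ℝ) (n : ℕ) :
    ∑ k ∈ range (n + 1), shiftPMF f k = ∑ k ∈ range n, f k := by
  simp [sum_range_succ']

lemma convPMF_nonneg {P Q : ℕ → ℝ} (hP : ∀ k, 0 ≤ P k) (hQ : ∀ k, 0 ≤ Q k) (k : ℕ) :
    0 ≤ convPMF P Q k :=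
  sum_nonneg fun j _ => mul_nonneg (hP j) (hQ (k - j))

lemma bernoulliPMF_nonneg {p : ℝ} (hp0 : 0 ≤ p) (hp1 : p ≤ 1) (k : ℕ) : 0 ≤ bernoulliPMF p k := by
  unfold bernoulliPMF
  split_ifs <;> linarith

lemma sum_shiftPMF_sub_mul_sub (f : ℕ → ℝ) (n : ℕ) (hf : ∑ k ∈ range n, f k = 1)
    (hfn : f n = 0) (c : ℝ) :
    ∑ k ∈ range (n + 1), (shiftPMF f k - f k) * (k - c) = 1 := by
  have hshift : ∑ k ∈ range (n + 1), shiftPMF f k * (k - c) = ∑ k ∈ range n, f k * (k + 1 - c) := by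
    simp [sum_range_succ']
  have hself : ∑ k ∈ range (n + 1), f k * (k - c) = ∑ k ∈ range n, f k * (k - c) := by
    simp [sum_range_succ, hfn]
  calc ∑ k ∈ range (n + 1), (shiftPMF f k - f k) * (k - c)
      = ∑ k ∈ range (n + 1), shiftPMF f k * (k - c) - ∑ k ∈ range (n + 1), f k * (k - c) := by
        rw [← sum_sub_distrib]
        exact sum_congr rfl fun k _ => sub_mul _ _ _
    _ = ∑ k ∈ range n, f k := by
        rw [hshift, hself, ← sum_sub_distrib]
        exact sum_congr rfl fun k _ => by ring
    _ = 1 := hf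

section Binomial

variable {q : ℝ}

lemma binomialPMF_eq_zero_of_lt {n k : ℕ} (h : n < k) : binomialPMF n q k = 0 := by
  simp [binomialPMF, Nat.choose_eq_zero_of_lt h]

lemma binomialPMF_nonneg (hq0 : 0 ≤ q) (hq1 : q ≤ 1) (n k : ℕ) : 0 ≤ binomialPMF n q k := by
  have : 0 ≤ 1 - q := by linarith
  unfold binomialPMF
  positivity

lemma binomialPMF_pos (hq0 : 0 < q) (hq1 : q < 1) {n k : ℕ} (hk : k ≤ n) :
    0 < binomialPMF n q k := by
  have : (0 : ℝ) < n.choose k := by exact_mod_cast Nat.choose_pos hk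
  have : 0 < 1 - q := by linarith
  unfold binomialPMF
  positivity

lemma sum_range_binomialPMF (n : ℕ) (q : ℝ) : ∑ k ∈ range (n + 1), binomialPMF n q k = 1 := by
  have h := add_pow q (1 - q) n
  rw [add_sub_cancel, one_pow] at h
  rw [h]
  exact sum_congr rfl fun k _ => by unfold binomialPMF; ring

lemma add_one_mul_mul_shiftPMF_binomialPMF (n k : ℕ) :
    (n + 1) * q * shiftPMF (binomialPMF n q) k = k * binomialPMF (n + 1) q k := by
  cases k with
  | zero => simp
  | succ j =>
    have hchoose : ((n + 1) * n.choose j : ℝ) = (n + 1).choose (j + 1) * (j + 1) := by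
      exact_mod_cast Nat.add_one_mul_choose_eq n j
    simp only [shiftPMF_succ, binomialPMF, Nat.add_sub_add_right]
    push_cast
    linear_combination q ^ (j + 1) * (1 - q) ^ (n - j) * hchoose

lemma add_one_mul_one_sub_mul_binomialPMF (n k : ℕ) :
    (n + 1) * (1 - q) * binomialPMF n q k = (n + 1 - k) * binomialPMF (n + 1) q k := by
  rcases le_or_gt k n with hk | hk
  · have hchoose : (n.choose k * (n + 1) : ℝ) = (n + 1).choose k * (n + 1 - k) := by
      have h := congrArg (Nat.cast (R := ℝ)) (Nat.choose_mul_succ_eq n k)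
      push_cast [Nat.cast_sub (show k ≤ n + 1 by omega)] at h
      exact h
    have hexp : n + 1 - k = n - k + 1 := by omega
    simp only [binomialPMF, hexp, pow_succ]
    linear_combination q ^ k * (1 - q) ^ (n - k) * (1 - q) * hchoose
  · rw [binomialPMF_eq_zero_of_lt hk, mul_zero]
    rcases (Nat.succ_le_of_lt hk).eq_or_lt with rfl | hk'
    · push_cast; ring
    · rw [binomialPMF_eq_zero_of_lt hk', mul_zero]

lemma convPMF_bernoulliPMF_binomialPMF (n : ℕ) (q : ℝ) :
    convPMF (bernoulliPMF q) (binomialPMF n q) = binomialPMF (n + 1) q := by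
  funext k
  rw [convPMF_bernoulliPMF_apply]
  apply mul_left_cancel₀ (show (n : ℝ) + 1 ≠ 0 by positivity)
  linear_combination add_one_mul_one_sub_mul_binomialPMF (q := q) n k
    + add_one_mul_mul_shiftPMF_binomialPMF (q := q) n k

lemma mul_shiftPMF_sub_binomialPMF (n k : ℕ) :
    (n + 1) * q * (1 - q) * (shiftPMF (binomialPMF n q) k - binomialPMF n q k)
      = (k - (n + 1) * q) * binomialPMF (n + 1) q k := by
  linear_combination (1 - q) * add_one_mul_mul_shiftPMF_binomialPMF (q := q) n k
    - q * add_one_mul_one_sub_mul_binomialPMF (q := q) n k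

lemma sum_sq_shiftPMF_sub_binomialPMF_div (hq0 : 0 < q) (hq1 : q < 1) (n : ℕ) :
    ∑ k ∈ range (n + 2), (shiftPMF (binomialPMF n q) k - binomialPMF n q k) ^ 2
        / binomialPMF (n + 1) q k = 1 / ((n + 1) * q * (1 - q)) := by
  have hc : (n + 1) * q * (1 - q) ≠ 0 := by
    have : 0 < 1 - q := by linarith
    positivity
  have hterm : ∀ k ∈ range (n + 2),
      (shiftPMF (binomialPMF n q) k - binomialPMF n q k) ^ 2 / binomialPMF (n + 1) q k
        = (shiftPMF (binomialPMF n q) k - binomialPMF n q k) * (k - (n + 1) * q)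
          / ((n + 1) * q * (1 - q)) := by
    intro k hk
    have hQ := (binomialPMF_pos hq0 hq1 (Nat.lt_succ_iff.mp (mem_range.mp hk))).ne'
    rw [div_eq_div_iff hQ hc]
    linear_combination (shiftPMF (binomialPMF n q) k - binomialPMF n q k)
      * mul_shiftPMF_sub_binomialPMF (q := q) n k
  rw [sum_congr rfl hterm, ← sum_div,
    sum_shiftPMF_sub_mul_sub _ _ (sum_range_binomialPMF n q)
      (binomialPMF_eq_zero_of_lt n.lt_succ_self)]

lemma sum_range_shiftPMF_sub_binomialPMF (n : ℕ) :
    ∑ k ∈ range (n + 2), (shiftPMF (binomialPMF n q) k - binomialPMF n q k) = 0 := by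
  rw [sum_sub_distrib, sum_range_succ_shiftPMF, sum_range_succ _ (n + 1),
    binomialPMF_eq_zero_of_lt n.lt_succ_self, add_zero, sub_self]

lemma convPMF_bernoulliPMF_binomialPMF_sub (p q : ℝ) (n k : ℕ) :
    convPMF (bernoulliPMF p) (binomialPMF n q) k - binomialPMF (n + 1) q k
      = (p - q) * (shiftPMF (binomialPMF n q) k - binomialPMF n q k) := by
  rw [← convPMF_bernoulliPMF_binomialPMF, convPMF_bernoulliPMF_apply, convPMF_bernoulliPMF_apply]
  ring

lemma convPMF_bernoulliPMF_binomialPMF_eq_zero_of_le {p : ℝ} {n k : ℕ} (hk : n + 2 ≤ k) :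
    convPMF (bernoulliPMF p) (binomialPMF n q) k = 0 := by
  obtain ⟨j, rfl⟩ : ∃ j, k = j + 1 := Nat.exists_eq_add_one.mpr (by omega)
  rw [convPMF_bernoulliPMF_apply, shiftPMF_succ, binomialPMF_eq_zero_of_lt (by omega),
    binomialPMF_eq_zero_of_lt (by omega)]
  ring

end Binomial

lemma mul_log_div_le {x y : ℝ} (hx : 0 ≤ x) (hy : 0 < y) :
    x * Real.log (x / y) ≤ (x - y) ^ 2 / y + (x - y) := by
  have hrhs : (x - y) ^ 2 / y + (x - y) = x * (x / y - 1) := by field_simp; ring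
  rw [hrhs]
  rcases hx.eq_or_lt with rfl | hx
  · simp
  · exact mul_le_mul_of_nonneg_left (Real.log_le_sub_one_of_pos (div_pos hx hy)) hx.le

lemma klDivN_le_sum_sq_sub_div {P Q : ℕ → ℝ} (s : Finset ℕ) (hPs : ∀ k ∉ s, P k = 0)
    (hP : ∀ k, 0 ≤ P k) (hQ : ∀ k ∈ s, 0 < Q k) (hPQ : ∑ k ∈ s, P k = ∑ k ∈ s, Q k) :
    klDivN P Q ≤ ∑ k ∈ s, (P k - Q k) ^ 2 / Q k := by
  rw [klDivN, tsum_eq_sum fun k hk => by rw [hPs k hk, zero_mul]]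
  calc ∑ k ∈ s, P k * Real.log (P k / Q k)
      ≤ ∑ k ∈ s, ((P k - Q k) ^ 2 / Q k + (P k - Q k)) :=
        sum_le_sum fun k hk => mul_log_div_le (hP k) (hQ k hk)
    _ = ∑ k ∈ s, (P k - Q k) ^ 2 / Q k := by
        rw [sum_add_distrib, sum_sub_distrib, hPQ, sub_self, add_zero]

theorem stmt_7_general (ℓ : ℕ)
    (p p' : ℝ) (hp : p ∈ Set.Ioo (0 : ℝ) 1) (hp' : p' ∈ Set.Ioo (0 : ℝ) 1) :
    klDivN (convPMF (bernoulliPMF p) (binomialPMF ℓ p'))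
        (convPMF (bernoulliPMF p') (binomialPMF ℓ p')) ≤
      (p - p') ^ 2 / ((1 - p') * p' * ((ℓ : ℝ) + 1)) := by
  obtain ⟨hp0, hp1⟩ := hp
  obtain ⟨hq0, hq1⟩ := hp'
  have hPQ := convPMF_bernoulliPMF_binomialPMF_sub p p' ℓ
  have hsum : ∑ k ∈ range (ℓ + 2), convPMF (bernoulliPMF p) (binomialPMF ℓ p') k
      = ∑ k ∈ range (ℓ + 2), binomialPMF (ℓ + 1) p' k := by
    rw [← sub_eq_zero, ← sum_sub_distrib, sum_congr rfl fun k _ => hPQ k, ← mul_sum,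
      sum_range_shiftPMF_sub_binomialPMF, mul_zero]
  rw [convPMF_bernoulliPMF_binomialPMF]
  calc _ ≤ ∑ k ∈ range (ℓ + 2),
          (convPMF (bernoulliPMF p) (binomialPMF ℓ p') k - binomialPMF (ℓ + 1) p' k) ^ 2
            / binomialPMF (ℓ + 1) p' k :=
        klDivN_le_sum_sq_sub_div _
          (fun k hk => convPMF_bernoulliPMF_binomialPMF_eq_zero_of_le (by simpa using hk))
          (convPMF_nonneg (bernoulliPMF_nonneg hp0.le hp1.le)
            (binomialPMF_nonneg hq0.le hq1.le ℓ))
          (fun k hk => binomialPMF_pos hq0 hq1 (Nat.lt_succ_iff.mp (mem_range.mp hk))) hsum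
    _ = (p - p') ^ 2 * ∑ k ∈ range (ℓ + 2),
          (shiftPMF (binomialPMF ℓ p') k - binomialPMF ℓ p' k) ^ 2 / binomialPMF (ℓ + 1) p' k := by
        simp_rw [hPQ, mul_pow, mul_div_assoc, mul_sum]
    _ = _ := by
        rw [sum_sq_shiftPMF_sub_binomialPMF_div hq0 hq1]
        field_simp

theorem stmt_7 (ℓ : ℕ) (hℓ : 1 ≤ ℓ)
    (p p' : ℝ) (hp : p ∈ Set.Ioo (0 : ℝ) 1) (hp' : p' ∈ Set.Ioo (0 : ℝ) 1) :
    klDivN (convPMF (bernoulliPMF p) (binomialPMF ℓ p'))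
        (convPMF (bernoulliPMF p') (binomialPMF ℓ p')) ≤
      (p - p') ^ 2 / ((1 - p') * p' * ((ℓ : ℝ) + 1)) :=
  stmt_7_general ℓ p p' hp hp'
end

section
/- Let d be a positive integer, let K ⊆ ℝ^d be a convex set, and let F : ℝ^d → ℝ be a convex function differentiable at a point w and at a point x* ∈ K. Define the Bregman divergence D_F(y, z) = F(y) − F(z) − ⟨y − z, ∇F(z)⟩. Suppose x* minimizes y ↦ D_F(y, w) over K, i.e., D_F(x*, w) ≤ D_F(y, w) for all y ∈ K. Then for every a ∈ K, D_F(a, w) ≥ D_F(a, x*) + D_F(x*, w). -/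
/-!
The map `y ↦ D_F(y, w)` has gradient `∇F(x*) - ∇F(w)` at `x*`, so minimality of `x*` on
the convex set `K` gives the first-order condition `⟪a - x*, ∇F(x*) - ∇F(w)⟫ ≥ 0` for `a ∈ K`.
The three-point identity `D_F(a, w) = D_F(a, x*) + D_F(x*, w) + ⟪a - x*, ∇F(x*) - ∇F(w)⟫`
then gives the inequality.
-/

open scoped RealInnerProductSpace

variable {E : Type*} [NormedAddCommGroup E] [InnerProductSpace ℝ E]

theorem IsMinOn.inner_sub_nonneg_of_hasGradientAt [CompleteSpace E] {f : E → ℝ} {K : Set E}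
    {x g a : E} (hK : Convex ℝ K) (hx : x ∈ K) (hmin : IsMinOn f K x) (hf : HasGradientAt f g x)
    (ha : a ∈ K) : 0 ≤ ⟪a - x, g⟫ := by
  have h := hmin.localize.hasFDerivWithinAt_nonneg hf.hasFDerivAt.hasFDerivWithinAt
    (sub_mem_posTangentConeAt_of_segment_subset (hK.segment_subset hx ha))
  rwa [InnerProductSpace.toDual_apply_apply, real_inner_comm] at h

/-- `bregmanDiv F y z g` is `D_F(y, z)` when `g = ∇F(z)`. -/
def bregmanDiv (F : E → ℝ) (y z g : E) : ℝ :=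
  F y - F z - ⟪y - z, g⟫

theorem bregmanDiv_eq_add_add_inner (F : E → ℝ) (a x w gx gw : E) :
    bregmanDiv F a w gw = bregmanDiv F a x gx + bregmanDiv F x w gw + ⟪a - x, gx - gw⟫ := by
  simp only [bregmanDiv, inner_sub_left, inner_sub_right]
  ring

theorem hasGradientAt_bregmanDiv_left [CompleteSpace E] {F : E → ℝ} {x gx : E}
    (hF : HasGradientAt F gx x) (w gw : E) :
    HasGradientAt (fun y ↦ bregmanDiv F y w gw) (gx - gw) x := by
  have hlin : HasGradientAt (fun y ↦ ⟪y - w, gw⟫) gw x := by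
    have h : (fun y ↦ ⟪y - w, gw⟫) = fun y ↦ ⟪gw, y⟫ - ⟪gw, w⟫ := by
      ext y
      rw [inner_sub_left, real_inner_comm, real_inner_comm w]
    rw [h, hasGradientAt_iff_hasFDerivAt]
    exact (InnerProductSpace.toDual ℝ E gw : E →L[ℝ] ℝ).hasFDerivAt.sub_const _
  rw [hasGradientAt_iff_hasFDerivAt, map_sub] at *
  exact (hF.sub_const (F w)).sub hlin

theorem stmt_14_general (d : ℕ)
    (K : Set (EuclideanSpace ℝ (Fin d))) (hK : Convex ℝ K)
    (F : EuclideanSpace ℝ (Fin d) → ℝ)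
    (w xstar : EuclideanSpace ℝ (Fin d)) (hxstar : xstar ∈ K)
    (gw gx : EuclideanSpace ℝ (Fin d))
    (hgx : HasGradientAt F gx xstar)
    (hmin : ∀ y ∈ K, F xstar - F w - ⟪xstar - w, gw⟫ ≤ F y - F w - ⟪y - w, gw⟫)
    (a : EuclideanSpace ℝ (Fin d)) (ha : a ∈ K) :
    F a - F w - ⟪a - w, gw⟫ ≥
      (F a - F xstar - ⟪a - xstar, gx⟫) + (F xstar - F w - ⟪xstar - w, gw⟫) := by
  have hopt : 0 ≤ ⟪a - xstar, gx - gw⟫ :=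
    (isMinOn_iff.mpr hmin : IsMinOn (fun y ↦ bregmanDiv F y w gw) K xstar)
      |>.inner_sub_nonneg_of_hasGradientAt hK hxstar (hasGradientAt_bregmanDiv_left hgx w gw) ha
  have hthree := bregmanDiv_eq_add_add_inner F a xstar w gx gw
  simp only [bregmanDiv] at hthree
  linarith

theorem stmt_14 (d : ℕ) (hd : 0 < d)
    (K : Set (EuclideanSpace ℝ (Fin d))) (hK : Convex ℝ K)
    (F : EuclideanSpace ℝ (Fin d) → ℝ) (hF : ConvexOn ℝ Set.univ F)
    (w xstar : EuclideanSpace ℝ (Fin d)) (hxstar : xstar ∈ K)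
    (gw gx : EuclideanSpace ℝ (Fin d))
    (hgw : HasGradientAt F gw w) (hgx : HasGradientAt F gx xstar)
    (hmin : ∀ y ∈ K, F xstar - F w - ⟪xstar - w, gw⟫ ≤ F y - F w - ⟪y - w, gw⟫)
    (a : EuclideanSpace ℝ (Fin d)) (ha : a ∈ K) :
    F a - F w - ⟪a - w, gw⟫ ≥
      (F a - F xstar - ⟪a - xstar, gx⟫) + (F xstar - F w - ⟪xstar - w, gw⟫) :=
  stmt_14_general d K hK F w xstar hxstar gw gx hgx hmin a ha
end

section
/- Let n and d be real numbers with n ≥ d ≥ 1. Then for every real η > 0: max( (n·d/16) · tanh(η·d/8), min( d·log 2 / (12·η), n·d/12 ) ) ≥ 0.01 · d^(3/2) · √n. -/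
/-! With s = √(dn) we have d ≤ s, nd = s², and the right-hand side is 0.01·d·s. The threshold
η·s = 4 separates two regimes. If η·s ≤ 4, both terms of the min exceed 0.01·d·s, using
log 2 > 0.48 and s ≥ d. If η·s ≥ 4, then ηd/8 ≥ (d/s)/2 with d/s ≤ 1, and tanh x ≥ min(x, 1)/2
(a consequence of tanh x ≥ x/(1+x)) gives tanh(ηd/8) ≥ d/(4s), so the tanh term is at least d·s/64. -/

open Real

lemma Real.div_one_add_le_tanh {x : ℝ} (hx : 0 ≤ x) : x / (1 + x) ≤ tanh x := by
  have h2x : 1 + 2 * x ≤ exp (2 * x) := by linarith [add_one_le_exp (2 * x)]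
  have hexp : exp (2 * x) = exp x * exp x := by rw [← exp_add, two_mul]
  have hprod : exp x * exp (-x) = 1 := by rw [← exp_add, add_neg_cancel, exp_zero]
  rw [tanh_eq, div_le_div_iff₀ (by positivity) (by positivity)]
  nlinarith [exp_pos x, exp_pos (-x), mul_nonneg hx (exp_pos (-x)).le]

lemma Real.min_one_div_two_le_tanh {x : ℝ} (hx : 0 ≤ x) : min x 1 / 2 ≤ tanh x := by
  refine le_trans ?_ (div_one_add_le_tanh hx)
  rw [div_le_div_iff₀ two_pos (by positivity)]
  rcases le_total x 1 with h | h
  · rw [min_eq_left h]; nlinarith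
  · rw [min_eq_right h]; linarith

lemma rpow_three_halves_mul_sqrt {d : ℝ} (hd : 0 ≤ d) (n : ℝ) :
    d ^ ((3 : ℝ) / 2) * √n = d * √(d * n) := by
  rw [sqrt_mul hd, show (3 : ℝ) / 2 = 1 + 1 / 2 by norm_num, rpow_add' hd (by norm_num),
    rpow_one, ← sqrt_eq_rpow, mul_assoc]

lemma le_min_of_mul_le_four {n d s η : ℝ} (hd : 0 ≤ d) (hds : d ≤ s) (hs : s ^ 2 = n * d)
    (hη : 0 < η) (hηs : η * s ≤ 4) :
    0.01 * (d * s) ≤ min (d * log 2 / (12 * η)) (n * d / 12) := by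
  have hlog : 0.48 ≤ log 2 := by linarith [log_two_gt_d9]
  refine le_min ?_ ?_
  · rw [le_div_iff₀ (by positivity)]
    nlinarith [mul_le_mul_of_nonneg_left hηs hd]
  · nlinarith [mul_le_mul_of_nonneg_left hds hd]

lemma le_tanh_of_four_le_mul {n d s η : ℝ} (hd : 0 < d) (hds : d ≤ s) (hs : s ^ 2 = n * d)
    (hηs : 4 ≤ η * s) :
    0.01 * (d * s) ≤ (n * d / 16) * tanh (η * d / 8) := by
  have hs0 : 0 < s := hd.trans_le hds
  have hx : d / s / 2 ≤ min (η * d / 8) 1 := by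
    refine le_min ?_ ?_
    · rw [div_div, div_le_iff₀ (by positivity)]
      nlinarith [mul_le_mul_of_nonneg_left hηs hd.le]
    · rw [div_div, div_le_one (by positivity)]; linarith
  have htanh : d / s / 4 ≤ tanh (η * d / 8) := by
    have := min_one_div_two_le_tanh (x := η * d / 8) (by nlinarith)
    linarith
  calc 0.01 * (d * s) ≤ s ^ 2 / 16 * (d / s / 4) := by
        field_simp; nlinarith [mul_pos hd hs0]
    _ ≤ n * d / 16 * tanh (η * d / 8) := by
        rw [hs]; exact mul_le_mul_of_nonneg_left htanh (by nlinarith)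

theorem stmt_16 (n d : ℝ) (hd : 1 ≤ d) (hnd : d ≤ n) (η : ℝ) (hη : 0 < η) :
    max ((n * d / 16) * Real.tanh (η * d / 8))
        (min (d * Real.log 2 / (12 * η)) (n * d / 12)) ≥
      0.01 * d ^ ((3 : ℝ) / 2) * Real.sqrt n := by
  have hd0 : 0 < d := by linarith
  set s := √(d * n)
  have hs : s ^ 2 = n * d := by rw [sq_sqrt (by nlinarith), mul_comm]
  have hds : d ≤ s := le_sqrt_of_sq_le (by nlinarith)
  rw [mul_assoc, rpow_three_halves_mul_sqrt hd0.le, ge_iff_le]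
  rcases le_total (η * s) 4 with hηs | hηs
  · exact le_max_of_le_right (le_min_of_mul_le_four hd0.le hds hs hη hηs)
  · exact le_max_of_le_left (le_tanh_of_four_le_mul hd0 hds hs hηs)
end
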